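/- arXiv:2112.14422 — 7 statements merged into one kernel-verified Lean document; each statement's English description precedes it below -/
import Mathlib

section
/- For every integer b ≥ 2 and integer n ≥ 1, the quantity ν̄(n,b) := (2/(b-1)) S_b(n) - ((n-1)/(b-1)) d_b(n) equals Σ_{i≥1} Σ_{j=1}^{n-1} (⌊n/b^i⌋ - ⌊j/b^i⌋ - ⌊(n-j)/b^i⌋), and in particular ν̄(n,b) is a nonnegative integer. -/
/-!
Legendre's digit formula `(b - 1) · Σ_{i ≥ 1} ⌊m / bⁱ⌋ = m - d_b(m)` turns the inner sum over `i`
into `(d_b(j) + d_b(n - j) - d_b(n)) / (b - 1)`, which is Kummer's number of carries in the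
addition `j + (n - j) = n`, a natural number. Summing over `j`, the reflection `j ↦ n - j` makes
both digit sums contribute `S_b(n)`, which yields `2 S_b(n) - (n - 1) d_b(n)`.
-/

/-- Sum of base-`b` digits of `n`. -/
def digSum (b n : ℕ) : ℕ := (Nat.digits b n).sum

/-- Running digit sum `S_b(n) = Σ_{j=1}^{n-1} d_b(j)`. -/
def runSum (b n : ℕ) : ℕ := ∑ j ∈ Finset.range n, digSum b j

/-- The statistic `ν̄(n,b) = (2 S_b(n) - (n-1) d_b(n)) / (b-1)`. -/
def nubar (n b : ℕ) : ℚ :=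
  (2 * (runSum b n : ℚ) - ((n : ℚ) - 1) * (digSum b n : ℚ)) / ((b : ℚ) - 1)

open Finset

theorem sum_range_add_reflect_sub {R : Type*} [CommRing R] (f : ℕ → R) (n : ℕ) :
    ∑ j ∈ range n, (f j + f (n - j) - f n) = 2 * ∑ j ∈ range n, f j - (n - 1) * f n - f 0 := by
  have hreflect : ∑ j ∈ range n, f (n - j) = ∑ j ∈ range n, f j + f n - f 0 := by
    calc ∑ j ∈ range n, f (n - j) = ∑ j ∈ range n, f (n - 1 - j + 1) :=
          sum_congr rfl fun j hj => by rw [mem_range] at hj; congr 1; omega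
      _ = ∑ j ∈ range n, f (j + 1) := sum_range_reflect (fun j => f (j + 1)) n
      _ = ∑ j ∈ range n, f j + f n - f 0 := by
          rw [eq_sub_iff_add_eq, ← sum_range_succ', sum_range_succ]
  simp only [sum_sub_distrib, sum_add_distrib, sum_const, card_range, nsmul_eq_mul, hreflect]
  ring

section
variable {b : ℕ}

theorem sum_range_div_pow_congr (hb : 1 < b) {m K L : ℕ} (hK : m < b ^ K) (hL : m < b ^ L) :
    ∑ i ∈ range K, m / b ^ (i + 1) = ∑ i ∈ range L, m / b ^ (i + 1) := by
  wlog hKL : K ≤ L generalizing K L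
  · exact (this hL hK (by omega)).symm
  refine sum_subset (range_subset_range.mpr hKL) fun i _ hi => Nat.div_eq_of_lt ?_
  exact hK.trans_le (Nat.pow_le_pow_right (by omega) (by simp at hi; omega))

theorem sub_one_mul_sum_div_pow_eq_sub_digSum (hb : 1 < b) {m K : ℕ} (hm : m < b ^ K) :
    ((b : ℚ) - 1) * ∑ i ∈ range K, ((m / b ^ (i + 1) : ℕ) : ℚ) = m - digSum b m := by
  have h := Nat.sub_one_mul_sum_log_div_pow_eq_sub_sum_digits (p := b) m
  rw [← sum_range_div_pow_congr hb hm (Nat.lt_pow_succ_log_self hb m)] at h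
  rw [digSum, ← Nat.cast_sub (Nat.digit_sum_le b m), ← h]
  push_cast [Nat.cast_sub hb.le]
  rfl

theorem natCast_div_sub_div_sub_div {n j : ℕ} (hj : j ≤ n) (d : ℕ) :
    ((n / d - j / d - (n - j) / d : ℕ) : ℚ) = (n / d : ℕ) - (j / d : ℕ) - ((n - j) / d : ℕ) := by
  have h : j / d + (n - j) / d ≤ n / d := by
    simpa [Nat.add_sub_cancel' hj] using Nat.div_add_div_le_add_div (x := j) (y := n - j) (z := d)
  rw [Nat.cast_sub (Nat.le_sub_of_add_le' h), Nat.cast_sub (le_trans (Nat.le_add_right _ _) h)]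

/-- The number of carries in the first `K` base-`b` digit positions of the addition
`j + (n - j) = n`. -/
def carries (b K n j : ℕ) : ℕ :=
  ∑ i ∈ range K, (n / b ^ (i + 1) - j / b ^ (i + 1) - (n - j) / b ^ (i + 1))

theorem sub_one_mul_carries (hb : 1 < b) {K n j : ℕ} (hn : n < b ^ K) (hj : j ≤ n) :
    ((b : ℚ) - 1) * carries b K n j = digSum b j + digSum b (n - j) - digSum b n := by
  have hsum (m : ℕ) (hm : m ≤ n) := sub_one_mul_sum_div_pow_eq_sub_digSum hb (hm.trans_lt hn)
  simp only [carries, Nat.cast_sum, natCast_div_sub_div_sub_div hj, sum_sub_distrib, mul_sub,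
    hsum n le_rfl, hsum j hj, hsum (n - j) (Nat.sub_le n j), Nat.cast_sub hj]
  ring

theorem nubar_eq_sum_carries (hb : 1 < b) {n K : ℕ} (hn : n < b ^ K) :
    nubar n b = ∑ j ∈ Ico 1 n, (carries b K n j : ℚ) := by
  have hb₁ : (b : ℚ) - 1 ≠ 0 := sub_ne_zero.mpr (by exact_mod_cast hb.ne')
  have hIco : ∑ j ∈ Ico 1 n, (carries b K n j : ℚ) = ∑ j ∈ range n, (carries b K n j : ℚ) := by
    refine sum_subset (fun j hj => by simp at hj ⊢; omega) fun j hj hj' => ?_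
    obtain rfl : j = 0 := by simp at hj hj'; omega
    simp [carries]
  rw [nubar, div_eq_iff hb₁, hIco, sum_mul]
  have hcarries : ∀ j ∈ range n, (carries b K n j : ℚ) * ((b : ℚ) - 1) =
      digSum b j + digSum b (n - j) - digSum b n := fun j hj => by
    rw [mul_comm, sub_one_mul_carries hb hn (mem_range.mp hj).le]
  rw [sum_congr rfl hcarries, sum_range_add_reflect_sub (fun m => (digSum b m : ℚ)), runSum]
  simp [digSum]

theorem tsum_sum_Ico_div_pow_eq_sum_carries (hb : 1 < b) (n : ℕ) :
    ∑' i : ℕ, ∑ j ∈ Ico 1 n, (((n / b ^ (i + 1) : ℕ) : ℚ) - ((j / b ^ (i + 1) : ℕ) : ℚ)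
      - (((n - j) / b ^ (i + 1) : ℕ) : ℚ)) = ∑ j ∈ Ico 1 n, (carries b n n j : ℚ) := by
  rw [tsum_eq_sum (s := range n), sum_comm]
  · refine sum_congr rfl fun j hj => ?_
    simp only [carries, Nat.cast_sum, natCast_div_sub_div_sub_div (mem_Ico.mp hj).2.le]
  · intro i hi
    have hvanish (m : ℕ) (hm : m ≤ n) : m / b ^ (i + 1) = 0 := Nat.div_eq_of_lt <|
      hm.trans_lt <| (Nat.lt_pow_self hb).trans_le <|
        Nat.pow_le_pow_right (by omega) (by simp at hi; omega)
    refine sum_eq_zero fun j hj => ?_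
    rw [hvanish n le_rfl, hvanish j (mem_Ico.mp hj).2.le, hvanish (n - j) (Nat.sub_le n j)]
    simp

end

theorem nubar_eq_double_sum_general (b n : ℕ) (hb : 2 ≤ b) :
    nubar n b =
        ∑' i : ℕ, ∑ j ∈ Finset.Ico 1 n,
          (((n / b ^ (i + 1) : ℕ) : ℚ) - ((j / b ^ (i + 1) : ℕ) : ℚ)
            - (((n - j) / b ^ (i + 1) : ℕ) : ℚ)) ∧
      ∃ k : ℕ, nubar n b = (k : ℚ) := by
  have hnubar := nubar_eq_sum_carries hb (Nat.lt_pow_self hb : n < b ^ n)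
  refine ⟨hnubar.trans (tsum_sum_Ico_div_pow_eq_sum_carries hb n).symm,
    ∑ j ∈ Ico 1 n, carries b n n j, ?_⟩
  rw [hnubar]
  push_cast
  rfl

/-- `ν̄(n,b)` equals the double sum `Σ_{i≥1} Σ_{j=1}^{n-1} (⌊n/b^i⌋ - ⌊j/b^i⌋ - ⌊(n-j)/b^i⌋)`,
and in particular is a nonnegative integer. -/
theorem nubar_eq_double_sum (b n : ℕ) (hb : 2 ≤ b) (hn : 1 ≤ n) :
    nubar n b =
        ∑' i : ℕ, ∑ j ∈ Finset.Ico 1 n,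
          (((n / b ^ (i + 1) : ℕ) : ℚ) - ((j / b ^ (i + 1) : ℕ) : ℚ)
            - (((n - j) / b ^ (i + 1) : ℕ) : ℚ)) ∧
      ∃ k : ℕ, nubar n b = (k : ℚ) :=
  nubar_eq_double_sum_general b n hb
end

section
/- Let b ≥ 2 and n ≥ 1 be integers. Then ν̄(n,b) = 0 if and only if n = a·b^k + b^k - 1 for some a ∈ {1, 2, ..., b-1} and some integer k ≥ 0. -/
/-!
Let `T(n) = 2 S_b(n) - (n - 1) d_b(n) = (b - 1) ν̄(n,b)`. Splitting off the last digit,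
`n = b m + r` with `r < b`, gives `T(b m + r) = b T(m) + (b - 1 - r) (b m - d_b(m))`. Both summands
are nonnegative and `b m - d_b(m) > 0` for `m > 0`, so for `n ≥ b` we get `T(n) = 0` exactly when
`T(m) = 0` and `r = b - 1`. Thus `ν̄(n,b) = 0` iff every digit of `n` below the leading one is
`b - 1`, i.e. `n + 1 = (a + 1) b^k` with `0 < a < b`.
-/

open Finset

section

variable {b : ℕ}

theorem Nat.mul_add_induction (hb : 1 < b) {P : ℕ → Prop} (zero : P 0)
    (step : ∀ m r, r < b → P m → P (b * m + r)) (n : ℕ) : P n := by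
  induction n using Nat.strong_induction_on with
  | _ n ih =>
    rcases Nat.eq_zero_or_pos n with rfl | hn
    · exact zero
    · rw [← Nat.div_add_mod n b]
      exact step _ _ (Nat.mod_lt n (by omega)) (ih _ (Nat.div_lt_self hn hb))

theorem digSum_mul_add (hb : 1 < b) (m : ℕ) {r : ℕ} (hr : r < b) :
    digSum b (b * m + r) = r + digSum b m := by
  rcases Nat.eq_zero_or_pos (b * m + r) with h | h
  · obtain ⟨rfl, rfl⟩ : m = 0 ∧ r = 0 := by
      constructor <;> nlinarith
    simp [digSum]
  · rw [digSum, add_comm, Nat.digits_add b hb r m hr (by by_contra!; simp_all), List.sum_cons,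
      digSum]

theorem digSum_lt_mul (hb : 1 < b) {m : ℕ} (hm : 0 < m) : digSum b m < b * m :=
  (Nat.digit_sum_le b m).trans_lt (lt_mul_left hm hb)

theorem sum_digSum_mul_add (hb : 1 < b) (m : ℕ) {r : ℕ} (hr : r ≤ b) :
    ∑ i ∈ range r, digSum b (b * m + i) = ∑ i ∈ range r, i + r * digSum b m := by
  rw [Finset.sum_congr rfl fun i hi => digSum_mul_add hb m ((mem_range.mp hi).trans_le hr),
    sum_add_distrib, sum_const, card_range, smul_eq_mul]

theorem runSum_mul (hb : 1 < b) (m : ℕ) :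
    runSum b (b * m) = b * runSum b m + m * ∑ i ∈ range b, i := by
  induction m with
  | zero => simp [runSum]
  | succ m ih =>
    rw [mul_add_one, runSum, sum_range_add, ← runSum, ih, sum_digSum_mul_add hb m le_rfl,
      runSum, runSum, sum_range_succ]
    ring

theorem runSum_mul_add (hb : 1 < b) (m : ℕ) {r : ℕ} (hr : r ≤ b) :
    runSum b (b * m + r) = b * runSum b m + m * ∑ i ∈ range b, i + ∑ i ∈ range r, i
      + r * digSum b m := by
  rw [runSum, sum_range_add, ← runSum, runSum_mul hb, sum_digSum_mul_add hb m hr]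
  ring

def nubarNum (b n : ℕ) : ℤ := 2 * runSum b n - (n - 1) * digSum b n

theorem nubar_eq_nubarNum_div (b n : ℕ) : nubar n b = nubarNum b n / (b - 1) := by
  simp only [nubar, nubarNum]
  push_cast
  ring

theorem nubarNum_zero (b : ℕ) : nubarNum b 0 = 0 := by
  simp [nubarNum, runSum, digSum]

theorem nubarNum_mul_add (hb : 1 < b) (m : ℕ) {r : ℕ} (hr : r < b) :
    nubarNum b (b * m + r) = b * nubarNum b m + (b - 1 - r) * (b * m - digSum b m) := by
  have gauss (n : ℕ) : (∑ i ∈ range n, (i : ℤ)) * 2 = n * (n - 1 : ℤ) := by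
    have h := congrArg (Nat.cast : ℕ → ℤ) (sum_range_id_mul_two n)
    rcases n with _ | n <;> push_cast at h ⊢ <;> simp_all
  simp only [nubarNum, runSum_mul_add hb m hr.le, digSum_mul_add hb m hr]
  push_cast
  linear_combination m * gauss b + gauss r

theorem nubarNum_nonneg (hb : 1 < b) (n : ℕ) : 0 ≤ nubarNum b n := by
  induction n using Nat.mul_add_induction hb with
  | zero => rw [nubarNum_zero]
  | step m r hr ih =>
    rw [nubarNum_mul_add hb m hr]
    have hd : (digSum b m : ℤ) ≤ b * m := by
      exact_mod_cast (Nat.digit_sum_le b m).trans (Nat.le_mul_of_pos_left m (by omega))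
    have hr' : (r : ℤ) + 1 ≤ b := by exact_mod_cast hr
    exact add_nonneg (by positivity) (mul_nonneg (by linarith) (by linarith))

theorem nubarNum_eq_zero_of_add_one_eq (hb : 1 < b) {a : ℕ} (ha : a < b) (k : ℕ) {n : ℕ}
    (hn : n + 1 = (a + 1) * b ^ k) : nubarNum b n = 0 := by
  induction k generalizing n with
  | zero =>
    obtain rfl : n = a := by simpa using hn
    simpa [nubarNum_zero, digSum] using nubarNum_mul_add hb 0 ha
  | succ k ih =>
    obtain ⟨m, hm⟩ : ∃ m, (a + 1) * b ^ k = m + 1 :=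
      Nat.exists_eq_add_one.mpr (by positivity)
    obtain rfl : n = b * m + (b - 1) := by
      rw [pow_succ, ← mul_assoc, hm, add_one_mul, mul_comm] at hn
      omega
    rw [nubarNum_mul_add hb m (by omega), ih hm.symm, Nat.cast_sub hb.le]
    ring

theorem exists_add_one_eq_of_nubarNum_eq_zero (hb : 1 < b) {n : ℕ} (hn : 0 < n)
    (h : nubarNum b n = 0) : ∃ a k, 0 < a ∧ a < b ∧ n + 1 = (a + 1) * b ^ k := by
  induction n using Nat.mul_add_induction hb with
  | zero => omega
  | step m r hr ih =>
    rcases m.eq_zero_or_pos with rfl | hm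
    · exact ⟨r, 0, by simpa using hn, hr, by simp⟩
    have hb' : (0 : ℤ) < b := by exact_mod_cast hb.trans' one_pos
    have hr' : (r : ℤ) + 1 ≤ b := by exact_mod_cast hr
    have hd : (digSum b m : ℤ) < b * m := by exact_mod_cast digSum_lt_mul hb hm
    rw [nubarNum_mul_add hb m hr, add_eq_zero_iff_of_nonneg
      (mul_nonneg hb'.le (nubarNum_nonneg hb m)) (mul_nonneg (by linarith) (by linarith)),
      mul_eq_zero, mul_eq_zero] at h
    obtain ⟨hb0 | hm0, hr0 | hd0⟩ := h
    · omega
    · omega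
    · obtain ⟨a, k, ha0, hab, hk⟩ := ih hm hm0
      refine ⟨a, k + 1, ha0, hab, ?_⟩
      rw [pow_succ, ← mul_assoc, ← hk, add_one_mul, mul_comm m]
      omega
    · linarith

end

/-- `ν̄(n,b) = 0` iff `n = a·b^k + b^k - 1` with `1 ≤ a ≤ b-1`, `k ≥ 0`. -/
theorem nubar_eq_zero_iff (b n : ℕ) (hb : 2 ≤ b) (hn : 1 ≤ n) :
    nubar n b = 0 ↔
      ∃ a : ℕ, 1 ≤ a ∧ a ≤ b - 1 ∧ ∃ k : ℕ, n = a * b ^ k + b ^ k - 1 := by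
  have hden : (b : ℚ) - 1 ≠ 0 := sub_ne_zero.mpr (by exact_mod_cast (by omega : b ≠ 1))
  have form_iff (a k : ℕ) : n = a * b ^ k + b ^ k - 1 ↔ n + 1 = (a + 1) * b ^ k := by
    have := Nat.one_le_pow k b (by omega)
    rw [add_one_mul]
    omega
  rw [nubar_eq_nubarNum_div, div_eq_zero_iff, or_iff_left hden, Int.cast_eq_zero]
  constructor
  · intro h
    obtain ⟨a, k, ha0, hab, hk⟩ := exists_add_one_eq_of_nubarNum_eq_zero hb hn h
    exact ⟨a, ha0, by omega, k, (form_iff a k).mpr hk⟩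
  · rintro ⟨a, ha1, hab, k, hk⟩
    exact nubarNum_eq_zero_of_add_one_eq hb (by omega) k ((form_iff a k).mp hk)
end

section
/- (Drazin–Griffith inequality) For all integers b ≥ 2 and n ≥ 1, the running digit sum satisfies 0 ≤ S_b(n) ≤ (b-1)·n·log(n)/(2·log(b)). -/
/-! Write `n = b ^ k * a + m` with leading digit `1 ≤ a < b` and `m < b ^ k`. Splitting off the
leading digit gives `2 S(n) = a k (b - 1) b^k + b^k a (a - 1) + 2 a m + 2 S(m)`, so by strong
induction it suffices to bound the new terms by the increment of `(b - 1) x log x / log b` from `m`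
to `n`. Scaled by `b ^ k`, with `t = m / b ^ k ∈ [0, 1]`, this follows from concavity of `log`:
the increment `(a + t) log (a + t) - t log t` dominates the linear interpolation of `a log a` and
`(a + 1) log (a + 1)`, and at these endpoints the bound is `(x - 1) log b ≤ (b - 1) log x` for
`1 ≤ x ≤ b`. -/

open Finset Real

section DigitSums

variable {b : ℕ}

lemma digSum_of_lt {a : ℕ} (ha : a < b) : digSum b a = a := by
  rcases Nat.eq_zero_or_pos a with rfl | ha₀
  · simp [digSum]
  · simp [digSum, Nat.digits_of_lt b a ha₀.ne' ha]

lemma digSum_add_pow_mul (hb : 1 < b) {k j : ℕ} (hj : j < b ^ k) (a : ℕ) :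
    digSum b (j + b ^ k * a) = digSum b j + digSum b a := by
  rcases Nat.eq_zero_or_pos a with rfl | ha
  · simp [digSum]
  have hlen : (Nat.digits b j).length ≤ k := (Nat.digits_length_le_iff hb j).2 hj
  have h := Nat.digits_append_zeroes_append_digits (n := j) (k := k - (Nat.digits b j).length)
    hb ha
  rw [Nat.add_sub_cancel' hlen] at h
  simp [digSum, ← h]

lemma runSum_succ (n : ℕ) : runSum b (n + 1) = runSum b n + digSum b n :=
  sum_range_succ _ _

lemma runSum_pow_mul_add (hb : 1 < b) (k a : ℕ) {m : ℕ} (hm : m ≤ b ^ k) :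
    runSum b (b ^ k * a + m) = runSum b (b ^ k * a) + m * digSum b a + runSum b m := by
  have hblock :
      ∑ j ∈ range m, digSum b (b ^ k * a + j) = ∑ j ∈ range m, (digSum b a + digSum b j) :=
    sum_congr rfl fun j hj => by
      rw [add_comm, digSum_add_pow_mul hb ((mem_range.1 hj).trans_le hm), add_comm]
  rw [runSum, sum_range_add, hblock, sum_add_distrib, sum_const, card_range, smul_eq_mul, runSum,
    runSum, add_assoc]

lemma runSum_pow_mul (hb : 1 < b) (k a : ℕ) :
    runSum b (b ^ k * a) = a * runSum b (b ^ k) + b ^ k * runSum b a := by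
  induction a with
  | zero => simp [runSum]
  | succ a ih =>
    rw [mul_add_one, runSum_pow_mul_add hb k a le_rfl, ih, runSum_succ]
    ring

lemma runSum_mul_two_of_le {a : ℕ} (ha : a ≤ b) : runSum b a * 2 = a * (a - 1) := by
  rw [runSum, ← sum_range_id_mul_two]
  congr 1
  exact sum_congr rfl fun j hj => digSum_of_lt ((mem_range.1 hj).trans_le ha)

lemma runSum_pow_mul_two (hb : 1 < b) (k : ℕ) :
    runSum b (b ^ k) * 2 = k * (b - 1) * b ^ k := by
  induction k with
  | zero => simp [runSum, digSum]
  | succ k ih =>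
    rw [pow_succ, runSum_pow_mul hb, add_mul, mul_assoc b, ih, mul_assoc (b ^ k),
      runSum_mul_two_of_le le_rfl]
    ring

lemma exists_eq_pow_mul_add (hb : 1 < b) {n : ℕ} (hn : n ≠ 0) :
    ∃ k a m, 0 < a ∧ a < b ∧ m < b ^ k ∧ n = b ^ k * a + m := by
  have hpos : 0 < b ^ Nat.log b n := by positivity
  refine ⟨Nat.log b n, n / b ^ Nat.log b n, n % b ^ Nat.log b n,
    Nat.div_pos (Nat.pow_log_le_self b hn) hpos, ?_, Nat.mod_lt _ hpos,
    (Nat.div_add_mod _ _).symm⟩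
  rw [Nat.div_lt_iff_lt_mul hpos, ← pow_succ']
  exact Nat.lt_pow_succ_log_self hb n

end DigitSums

lemma log_chord_le {p q x : ℝ} (hp : 0 < p) (hpx : p ≤ x) (hxq : x ≤ q) :
    (q - x) * log p + (x - p) * log q ≤ (q - p) * log x := by
  rcases hpx.eq_or_lt with rfl | hpx
  · simp
  have hpq : 0 < q - p := by linarith
  have h := strictConcaveOn_log_Ioi.concaveOn.2 (Set.mem_Ioi.2 hp)
    (Set.mem_Ioi.2 (hp.trans_le (hpx.le.trans hxq)))
    (div_nonneg (sub_nonneg.2 hxq) hpq.le) (div_nonneg (sub_nonneg.2 hpx.le) hpq.le)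
    (by field_simp; ring)
  have hx : (q - x) / (q - p) * p + (x - p) / (q - p) * q = x := by field_simp; ring
  simp only [smul_eq_mul, hx] at h
  calc (q - x) * log p + (x - p) * log q
      = (q - p) * ((q - x) / (q - p) * log p + (x - p) / (q - p) * log q) := by field_simp
    _ ≤ (q - p) * log x := mul_le_mul_of_nonneg_left h hpq.le

lemma sub_one_mul_log_le {x y : ℝ} (hx : 1 ≤ x) (hxy : x ≤ y) :
    (x - 1) * log y ≤ (y - 1) * log x := by
  simpa using log_chord_le one_pos hx hxy

lemma mul_log_le_mul_sub_one {t : ℝ} (ht : 0 ≤ t) : t * log t ≤ t * (t - 1) := by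
  rcases ht.eq_or_lt with rfl | ht
  · simp
  · exact mul_le_mul_of_nonneg_left (log_le_sub_one_of_pos ht) ht.le

lemma mul_log_interpolate_le {a t : ℝ} (ha : 1 ≤ a) (ht₀ : 0 ≤ t) (ht₁ : t ≤ 1) :
    (1 - t) * (a * log a) + t * ((a + 1) * log (a + 1)) ≤
      (a + t) * log (a + t) - t * log t := by
  have hchord : (1 - t) * log a + t * log (a + 1) ≤ log (a + t) := by
    simpa using log_chord_le (by linarith) (le_add_of_nonneg_right ht₀)
      (by linarith : a + t ≤ a + 1)
  have ha₀ : 0 < a := by linarith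
  have hgap : log (a + 1) - log a ≤ 1 := by
    rw [← log_div (by positivity) ha₀.ne']
    calc log ((a + 1) / a) ≤ (a + 1) / a - 1 := log_le_sub_one_of_pos (by positivity)
      _ = 1 / a := by field_simp; ring
      _ ≤ 1 := (div_le_one ha₀).2 ha
  nlinarith [mul_le_mul_of_nonneg_left hchord (by linarith : 0 ≤ a + t),
    mul_log_le_mul_sub_one ht₀,
    mul_le_mul_of_nonneg_left hgap (mul_nonneg ht₀ (sub_nonneg.2 ht₁))]

lemma leading_digit_le {a b t : ℝ} (ha : 1 ≤ a) (hab : a + 1 ≤ b) (ht₀ : 0 ≤ t)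
    (ht₁ : t ≤ 1) :
    (a * (a - 1) + 2 * a * t) * log b ≤ (b - 1) * ((a + t) * log (a + t) - t * log t) := by
  have hb : 0 ≤ b - 1 := by linarith
  have h₀ := mul_le_mul_of_nonneg_left (sub_one_mul_log_le (y := b) ha (by linarith))
    (by positivity : 0 ≤ (1 - t) * a)
  have h₁ := mul_le_mul_of_nonneg_left (sub_one_mul_log_le (by linarith) hab)
    (by positivity : 0 ≤ t * (a + 1))
  have h := mul_le_mul_of_nonneg_left (mul_log_interpolate_le ha ht₀ ht₁) hb
  linear_combination h₀ + h₁ + h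

lemma mul_log_mul (x y : ℝ) : x * y * log (x * y) = y * (x * log x) + x * (y * log y) := by
  have h := negMulLog_mul x y
  simp only [negMulLog] at h
  linarith

lemma leading_block_le {a b B m : ℝ} (ha : 1 ≤ a) (hab : a + 1 ≤ b) (hB : 0 < B)
    (hm₀ : 0 ≤ m) (hmB : m ≤ B) :
    (B * (a * (a - 1)) + 2 * a * m) * log b ≤
      (b - 1) * ((B * a + m) * log (B * a + m) - m * log m - B * a * log B) := by
  obtain ⟨t, rfl⟩ : ∃ t, m = B * t := ⟨m / B, by field_simp⟩
  have ht₀ : 0 ≤ t := nonneg_of_mul_nonneg_right hm₀ hB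
  have ht₁ : t ≤ 1 := by nlinarith
  have h := mul_le_mul_of_nonneg_left (leading_digit_le ha hab ht₀ ht₁) hB.le
  rw [← mul_add, mul_log_mul, mul_log_mul]
  linear_combination h

lemma runSum_mul_two_mul_log_le {b : ℕ} (hb : 1 < b) (n : ℕ) :
    (runSum b n : ℝ) * (2 * log b) ≤ (b - 1) * (n * log n) := by
  induction n using Nat.strong_induction_on with
  | _ n ih =>
  rcases eq_or_ne n 0 with rfl | hn
  · simp [runSum]
  obtain ⟨k, a, m, ha, hab, hm, rfl⟩ := exists_eq_pow_mul_add hb hn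
  have hsplit : runSum b (b ^ k * a + m) * 2 =
      a * (k * (b - 1) * b ^ k) + b ^ k * (a * (a - 1)) + 2 * a * m + runSum b m * 2 := by
    rw [runSum_pow_mul_add hb k a hm.le, runSum_pow_mul hb, digSum_of_lt hab,
      ← runSum_pow_mul_two hb, ← runSum_mul_two_of_le hab.le]
    ring
  have hsplitR := congrArg (Nat.cast : ℕ → ℝ) hsplit
  push_cast [Nat.cast_sub hb.le, Nat.cast_sub ha] at hsplitR
  have ihm := ih m (Nat.lt_add_of_pos_left (Nat.mul_pos (by positivity) ha))
  have hblock := leading_block_le (a := a) (b := b) (B := b ^ k) (m := m) (by exact_mod_cast ha)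
    (by exact_mod_cast hab) (by positivity) m.cast_nonneg (by exact_mod_cast hm.le)
  rw [log_pow] at hblock
  push_cast
  linear_combination log b * hsplitR + ihm + hblock

theorem running_digit_sum_bounds_general (b n : ℕ) (hb : 2 ≤ b) :
    0 ≤ (runSum b n : ℝ) ∧
      (runSum b n : ℝ) ≤ ((b : ℝ) - 1) * n * Real.log n / (2 * Real.log b) := by
  have hlog : 0 < 2 * log b := by
    have := log_pos (show (1 : ℝ) < b by exact_mod_cast hb)
    positivity
  refine ⟨Nat.cast_nonneg _, ?_⟩
  rw [le_div_iff₀ hlog, mul_assoc _ (n : ℝ)]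
  exact runSum_mul_two_mul_log_le hb n

/-- Drazin–Griffith: for `b ≥ 2`, `n ≥ 1`, `0 ≤ S_b(n) ≤ (b-1)·n·log n/(2 log b)`. -/
theorem running_digit_sum_bounds (b n : ℕ) (hb : 2 ≤ b) (hn : 1 ≤ n) :
    0 ≤ (runSum b n : ℝ) ∧
      (runSum b n : ℝ) ≤ ((b : ℝ) - 1) * n * Real.log n / (2 * Real.log b) :=
  running_digit_sum_bounds_general b n hb
end

section
/- For all real numbers n ≥ 1 and x ≥ 1, the following identity holds: C̄(n,n) + C̄(n,x) − C̄(n, n/x) = (log n)·Σ_{1≤b≤x} ⌊n/b⌋ − ⌊x⌋·log(⌊n/x⌋!) − n·H(x) + ⌊x⌋ + Σ_{1≤b≤x} ∫₁^{n/b} {u}/u du, where H(x) = Σ_{1≤b≤x} 1/b and {u} denotes the fractional part of u. -/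
open Real

/-- `C̄(n,x) = Σ_{1 ≤ b ≤ x} ⌊n/b⌋ log b` for real `n, x ≥ 1`. -/
noncomputable def Cbar (n x : ℝ) : ℝ :=
  ∑ b ∈ Finset.Icc 1 ⌊x⌋₊, (⌊n / (b : ℝ)⌋₊ : ℝ) * Real.log b

/-- `H(x) = Σ_{1 ≤ b ≤ x} 1/b`. -/
noncomputable def Hsum (x : ℝ) : ℝ := ∑ b ∈ Finset.Icc 1 ⌊x⌋₊, (1 : ℝ) / b

/-!
Two ingredients. First, since `{u}/u = 1 - k/u` on `(k, k+1)`, integrating piece by piece gives the exact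
Stirling-type formula `log ⌊y⌋! = ⌊y⌋ log y - y + 1 + ∫₁^y {u}/u du` for every `y > 0`.
Second, by the hyperbola method `C̄(n,n) - C̄(n,n/x)` is the sum of `log b` over the lattice points
`a b ≤ n` with `b > n/x`; all of them have `a ≤ x`, so summing over `a` first gives
`Σ_{a ≤ x} (log ⌊n/a⌋! - log ⌊n/x⌋!)`. Adding `C̄(n,x)` and applying the formula with `y = n/b`
termwise yields the identity.
-/

open MeasureTheory intervalIntegral Finset
open scoped Nat

lemma intervalIntegrable_fract_div {a b : ℝ} (ha : 0 < a) (hb : 0 < b) :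
    IntervalIntegrable (fun u => Int.fract u / u) volume a b := by
  have hinv : IntervalIntegrable (fun u : ℝ => u⁻¹) volume a b :=
    intervalIntegrable_inv (fun u hu => (lt_min ha hb |>.trans_le hu.1).ne') continuousOn_id
  rw [intervalIntegrable_iff] at hinv ⊢
  simp_rw [div_eq_mul_inv]
  refine hinv.bdd_mul (c := 1) measurable_fract.aestronglyMeasurable
    (Filter.Eventually.of_forall fun u => ?_)
  rw [Real.norm_of_nonneg (Int.fract_nonneg u)]
  exact (Int.fract_lt_one u).le

lemma fract_div_ae_eq {k : ℕ} {a b : ℝ} (ha0 : 0 < a) (hb0 : 0 < b)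
    (ha : a ∈ Set.Icc (k : ℝ) (k + 1)) (hb : b ∈ Set.Icc (k : ℝ) (k + 1)) :
    ∀ᵐ u, u ∈ Set.uIoc a b → Int.fract u / u = 1 - k * u⁻¹ := by
  filter_upwards [Measure.ae_ne volume ((k : ℝ) + 1)] with u hne hu
  have hlo : (k : ℝ) < u := (le_min ha.1 hb.1).trans_lt hu.1
  have hhi : u < k + 1 := (hu.2.trans (max_le ha.2 hb.2)).lt_of_ne hne
  have hfloor : ⌊u⌋ = k := Int.floor_eq_iff.mpr ⟨mod_cast hlo.le, mod_cast hhi⟩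
  have hu0 : u ≠ 0 := ((lt_min ha0 hb0).trans hu.1).ne'
  rw [Int.fract, hfloor]
  field_simp
  simp

lemma integral_fract_div_of_mem_Icc {k : ℕ} {a b : ℝ} (ha0 : 0 < a) (hb0 : 0 < b)
    (ha : a ∈ Set.Icc (k : ℝ) (k + 1)) (hb : b ∈ Set.Icc (k : ℝ) (k + 1)) :
    ∫ u in a..b, Int.fract u / u = (b - a) - k * Real.log (b / a) := by
  have hinv : IntervalIntegrable (fun u : ℝ => u⁻¹) volume a b :=
    intervalIntegrable_inv (fun u hu => (lt_min ha0 hb0 |>.trans_le hu.1).ne') continuousOn_id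
  rw [integral_congr_ae (fract_div_ae_eq ha0 hb0 ha hb), integral_sub intervalIntegrable_const
    (hinv.const_mul _), intervalIntegral.integral_const_mul, integral_inv_of_pos ha0 hb0]
  simp

lemma integral_one_fract_div_of_mem_Icc (k : ℕ) {y : ℝ} (hy0 : 0 < y)
    (hy : y ∈ Set.Icc (k : ℝ) (k + 1)) :
    ∫ u in (1 : ℝ)..y, Int.fract u / u = (y - 1) - k * Real.log y + Real.log k ! := by
  induction k generalizing y with
  | zero =>
    rw [integral_fract_div_of_mem_Icc one_pos hy0 (by norm_num) hy]
    simp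
  | succ k ih =>
    have hk : (0 : ℝ) < k + 1 := by positivity
    have hk_mem : ((k : ℝ) + 1) ∈ Set.Icc (k : ℝ) (k + 1) := by simp
    push_cast at hy ⊢
    rw [← integral_add_adjacent_intervals (b := (k : ℝ) + 1) (intervalIntegrable_fract_div one_pos hk)
      (intervalIntegrable_fract_div hk hy0), ih hk hk_mem,
      integral_fract_div_of_mem_Icc (k := k + 1) hk hy0 (by push_cast; simp) (by push_cast; exact hy),
      Nat.factorial_succ, Nat.cast_mul, Real.log_mul (by positivity) (by positivity),
      Real.log_div hy0.ne' hk.ne']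
    push_cast
    ring

lemma log_factorial_floor {y : ℝ} (hy : 0 < y) :
    Real.log ⌊y⌋₊ ! = ⌊y⌋₊ * Real.log y - y + 1 + ∫ u in (1 : ℝ)..y, Int.fract u / u := by
  rw [integral_one_fract_div_of_mem_Icc ⌊y⌋₊ hy ⟨Nat.floor_le hy.le, (Nat.lt_floor_add_one y).le⟩]
  ring

lemma Nat.Icc_one_eq_Ioc_zero (m : ℕ) : Icc 1 m = Ioc 0 m := Icc_add_one_left_eq_Ioc 0 m

lemma log_factorial_eq_sum (m : ℕ) : Real.log m ! = ∑ b ∈ Ioc 0 m, Real.log b := by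
  rw [← Ico_add_one_add_one_eq_Ioc, zero_add, ← prod_Ico_id_eq_factorial, Nat.cast_prod,
    Real.log_prod fun b hb => Nat.cast_ne_zero.mpr (by simp at hb; omega)]

lemma log_factorial_sub_log_factorial {k m : ℕ} (h : k ≤ m) :
    Real.log m ! - Real.log k ! = ∑ b ∈ Ioc k m, Real.log b := by
  rw [log_factorial_eq_sum, log_factorial_eq_sum, ← sum_Ioc_consecutive _ k.zero_le h,
    add_sub_cancel_left]

lemma Cbar_sub_Cbar {n y z : ℝ} (h : ⌊y⌋₊ ≤ ⌊z⌋₊) :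
    Cbar n z - Cbar n y = ∑ b ∈ Ioc ⌊y⌋₊ ⌊z⌋₊, (⌊n / b⌋₊ : ℝ) * Real.log b := by
  rw [Cbar, Cbar, Nat.Icc_one_eq_Ioc_zero, Nat.Icc_one_eq_Ioc_zero,
    ← sum_Ioc_consecutive _ (Nat.zero_le _) h, add_sub_cancel_left]

lemma Nat.le_floor_div_iff_mul_le {n : ℝ} (hn : 0 ≤ n) {a b : ℕ} (hb : 0 < b) :
    a ≤ ⌊n / b⌋₊ ↔ (a * b : ℝ) ≤ n := by
  rw [Nat.le_floor_iff (by positivity), le_div_iff₀ (by exact_mod_cast hb)]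

lemma Cbar_sub_Cbar_div {n x : ℝ} (hn : 0 ≤ n) (hx : 1 ≤ x) :
    Cbar n n - Cbar n (n / x)
      = ∑ a ∈ Icc 1 ⌊x⌋₊, Real.log ⌊n / a⌋₊ ! - ⌊x⌋₊ * Real.log ⌊n / x⌋₊ ! := by
  have hx0 : 0 < x := by linarith
  have hfloor_le (a : ℕ) (ha : a ∈ Icc 1 ⌊x⌋₊) : ⌊n / x⌋₊ ≤ ⌊n / a⌋₊ := by
    rw [mem_Icc] at ha
    refine Nat.floor_le_floor (div_le_div_of_nonneg_left hn (by exact_mod_cast ha.1) ?_)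
    exact (Nat.cast_le.mpr ha.2).trans (Nat.floor_le hx0.le)
  have hlattice (b a : ℕ) : b ∈ Ioc ⌊n / x⌋₊ ⌊n⌋₊ ∧ a ∈ Icc 1 ⌊n / b⌋₊ ↔
      b ∈ Ioc ⌊n / x⌋₊ ⌊n / a⌋₊ ∧ a ∈ Icc 1 ⌊x⌋₊ := by
    simp only [mem_Ioc, mem_Icc]
    have hxb_iff : ⌊n / x⌋₊ < b ↔ n < b * x := by
      rw [Nat.floor_lt (by positivity), div_lt_iff₀ hx0]
    constructor
    · rintro ⟨⟨hxb, -⟩, ha, hab⟩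
      have hb : 0 < b := by omega
      have hnx := hxb_iff.1 hxb
      rw [Nat.le_floor_div_iff_mul_le hn hb] at hab
      refine ⟨⟨hxb, (Nat.le_floor_div_iff_mul_le hn (by omega)).2 (by linarith)⟩, ha,
        Nat.le_floor ?_⟩
      have hb' : (0 : ℝ) < b := by exact_mod_cast hb
      nlinarith
    · rintro ⟨⟨hxb, hba⟩, ha, -⟩
      have hb : 0 < b := by omega
      rw [Nat.le_floor_div_iff_mul_le hn (by omega)] at hba
      refine ⟨⟨hxb, Nat.le_floor ?_⟩, ha, (Nat.le_floor_div_iff_mul_le hn hb).2 (by linarith)⟩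
      have ha' : (1 : ℝ) ≤ a := by exact_mod_cast ha
      nlinarith
  calc Cbar n n - Cbar n (n / x)
      = ∑ b ∈ Ioc ⌊n / x⌋₊ ⌊n⌋₊, ∑ _a ∈ Icc 1 ⌊n / b⌋₊, Real.log b := by
        rw [Cbar_sub_Cbar (Nat.floor_le_floor (div_le_self hn hx))]
        simp
    _ = ∑ a ∈ Icc 1 ⌊x⌋₊, ∑ b ∈ Ioc ⌊n / x⌋₊ ⌊n / a⌋₊, Real.log b := sum_comm' hlattice
    _ = ∑ a ∈ Icc 1 ⌊x⌋₊, (Real.log ⌊n / a⌋₊ ! - Real.log ⌊n / x⌋₊ !) :=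
        sum_congr rfl fun a ha => (log_factorial_sub_log_factorial (hfloor_le a ha)).symm
    _ = _ := by simp [sum_sub_distrib]

lemma floor_div_mul_log_add_log_factorial {n : ℝ} (hn : 0 < n) {b : ℕ} (hb : 0 < b) :
    ⌊n / b⌋₊ * Real.log b + Real.log ⌊n / b⌋₊ !
      = Real.log n * ⌊n / b⌋₊ - n * (1 / b) + 1 + ∫ u in (1 : ℝ)..(n / b), Int.fract u / u := by
  have hb' : (0 : ℝ) < b := by exact_mod_cast hb
  rw [log_factorial_floor (by positivity), Real.log_div hn.ne' hb'.ne']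
  ring

/-- The key functional identity for `C̄`. -/
theorem Cbar_functional_equation (n x : ℝ) (hn : 1 ≤ n) (hx : 1 ≤ x) :
    Cbar n n + Cbar n x - Cbar n (n / x) =
      Real.log n * (∑ b ∈ Finset.Icc 1 ⌊x⌋₊, (⌊n / (b : ℝ)⌋₊ : ℝ))
        - (⌊x⌋₊ : ℝ) * Real.log (Nat.factorial ⌊n / x⌋₊)
        - n * Hsum x + (⌊x⌋₊ : ℝ)
        + ∑ b ∈ Finset.Icc 1 ⌊x⌋₊, ∫ u in (1:ℝ)..(n / (b : ℝ)), Int.fract u / u := by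
  calc Cbar n n + Cbar n x - Cbar n (n / x)
      = ∑ b ∈ Icc 1 ⌊x⌋₊, (⌊n / b⌋₊ * Real.log b + Real.log ⌊n / b⌋₊ !)
          - ⌊x⌋₊ * Real.log ⌊n / x⌋₊ ! := by
        rw [add_sub_right_comm, Cbar_sub_Cbar_div (by linarith) hx, Cbar, sum_add_distrib]
        ring
    _ = ∑ b ∈ Icc 1 ⌊x⌋₊, (Real.log n * ⌊n / b⌋₊ - n * (1 / b) + 1
          + ∫ u in (1 : ℝ)..(n / b), Int.fract u / u) - ⌊x⌋₊ * Real.log ⌊n / x⌋₊ ! := by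
        congr 1
        refine sum_congr rfl fun b hb => floor_div_mul_log_add_log_factorial (by linarith) ?_
        exact (mem_Icc.mp hb).1
    _ = _ := by
        simp only [sum_add_distrib, sum_sub_distrib, ← mul_sum, Hsum, sum_const, Nat.card_Icc,
          add_tsub_cancel_right, nsmul_eq_mul, mul_one]
        ring
end

section
/- For real numbers n and x with 2 ≤ x ≤ n, one has ∫_x^n ⌊n/u⌋ log u du = (H_{⌊n/x⌋} − (x/n)⌊n/x⌋)·(n log n − n) − (J_{⌊n/x⌋} − (x/n)⌊n/x⌋·log(n/x))·n, where H_m = Σ_{j=1}^m 1/j and J_m = Σ_{j=1}^m (log j)/j. -/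
open Real

/-- Harmonic number `H_m = Σ_{j=1}^m 1/j`. -/
noncomputable def Hnum (m : ℕ) : ℝ := ∑ j ∈ Finset.Icc 1 m, (1 : ℝ) / j

/-- `J_m = Σ_{j=1}^m (log j)/j`. -/
noncomputable def Jnum (m : ℕ) : ℝ := ∑ j ∈ Finset.Icc 1 m, Real.log j / j

/-! For `u ≥ x > 0`, `⌊n/u⌋` counts the `j ≤ ⌊n/x⌋` with `u ≤ n/j`, so the integrand is a sum of
indicators and the integral becomes `∑_{j ≤ ⌊n/x⌋} ∫_x^{n/j} log u du`. Each term is elementary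
(`u log u - u` is a primitive of `log`), and `log (n/j) = log n - log j` turns the sum into
`H_m` and `J_m`. -/

open Finset intervalIntegral

lemma Nat.floor_div_eq_card_filter {K : Type*} [Field K] [LinearOrder K] [IsStrictOrderedRing K]
    [FloorSemiring K] {c u : K} (hu : 0 < u) {M : ℕ} (hM : ⌊c / u⌋₊ ≤ M) :
    ⌊c / u⌋₊ = #{j ∈ Icc 1 M | u ≤ c / (j : ℕ)} := by
  suffices {j ∈ Icc 1 M | u ≤ c / (j : ℕ)} = Icc 1 ⌊c / u⌋₊ by simp [this]
  ext j
  simp only [mem_filter, mem_Icc]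
  constructor
  · rintro ⟨⟨hj1, -⟩, hj⟩
    have hj0 : (0 : K) < j := by exact_mod_cast hj1
    refine ⟨hj1, (Nat.le_floor_iff' (by omega)).2 ?_⟩
    rwa [le_div_iff₀ hu, mul_comm, ← le_div_iff₀ hj0]
  · rintro ⟨hj1, hj⟩
    have hj0 : (0 : K) < j := by exact_mod_cast hj1
    refine ⟨⟨hj1, hj.trans hM⟩, ?_⟩
    rwa [Nat.le_floor_iff' (by omega), le_div_iff₀ hu, mul_comm, ← le_div_iff₀ hj0] at hj

lemma natCast_floor_div_mul_eq_sum_indicator {c u : ℝ} (hu : 0 < u) {M : ℕ}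
    (hM : ⌊c / u⌋₊ ≤ M) (f : ℝ → ℝ) :
    (⌊c / u⌋₊ : ℝ) * f u = ∑ j ∈ Icc 1 M, (Set.Iic (c / j)).indicator f u := by
  rw [Nat.floor_div_eq_card_filter hu hM, natCast_card_filter, sum_mul]
  simp [Set.indicator_apply]

theorem integral_floor_div_mul {c x : ℝ} {f : ℝ → ℝ} (hx : 0 < x) (hxc : x ≤ c)
    (hf : IntervalIntegrable f MeasureTheory.volume x c) :
    ∫ u in x..c, (⌊c / u⌋₊ : ℝ) * f u = ∑ j ∈ Icc 1 ⌊c / x⌋₊, ∫ u in x..c / j, f u := by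
  have hpos : ∀ u ∈ Set.uIcc x c, 0 < u := fun u hu =>
    hx.trans_le (Set.uIcc_of_le hxc ▸ hu).1
  have hbound : ∀ u ∈ Set.uIcc x c, ⌊c / u⌋₊ ≤ ⌊c / x⌋₊ := fun u hu =>
    Nat.floor_le_floor (div_le_div_of_nonneg_left (hx.le.trans hxc) hx
      (Set.uIcc_of_le hxc ▸ hu).1)
  rw [integral_congr fun u hu =>
      natCast_floor_div_mul_eq_sum_indicator (hpos u hu) (hbound u hu) f,
    integral_finsetSum fun j _ =>
      intervalIntegrable_iff.2 ((intervalIntegrable_iff.1 hf).indicator measurableSet_Iic)]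
  refine sum_congr rfl fun j hj => integral_indicator ⟨?_, ?_⟩
  · obtain ⟨hj1, hjm⟩ := mem_Icc.1 hj
    have hj0 : (0 : ℝ) < j := by exact_mod_cast hj1
    rw [le_div_iff₀ hj0, mul_comm, ← le_div_iff₀ hx]
    exact (Nat.le_floor_iff' (by omega)).1 hjm
  · exact div_le_self (hx.le.trans hxc) (by exact_mod_cast (mem_Icc.1 hj).1)

theorem sum_integral_log_div {c x : ℝ} (hc : c ≠ 0) (m : ℕ) :
    ∑ j ∈ Icc 1 m, ∫ u in x..c / j, log u
      = (c * log c - c) * Hnum m - c * Jnum m - m * (x * log x - x) := by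
  have hconst : (m : ℝ) * (x * log x - x) = ∑ _j ∈ Icc 1 m, (x * log x - x) := by
    simp [mul_sub]
  rw [hconst, Hnum, Jnum, mul_sum, mul_sum, ← sum_sub_distrib, ← sum_sub_distrib]
  refine sum_congr rfl fun j hj => ?_
  have hj0 : (j : ℝ) ≠ 0 := by have := (mem_Icc.1 hj).1; positivity
  rw [integral_log, log_div hc hj0]
  field_simp
  ring

/-- Closed form for `∫_x^n ⌊n/u⌋ log u du`. -/
theorem integral_floor_log (n x : ℝ) (hx : 2 ≤ x) (hxn : x ≤ n) :
    (∫ u in x..n, (⌊n / u⌋₊ : ℝ) * Real.log u) =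
      (Hnum ⌊n / x⌋₊ - (x / n) * (⌊n / x⌋₊ : ℝ)) * (n * Real.log n - n)
        - (Jnum ⌊n / x⌋₊ - (x / n) * (⌊n / x⌋₊ : ℝ) * Real.log (n / x)) * n := by
  have hx0 : 0 < x := by linarith
  have hn0 : n ≠ 0 := by linarith
  rw [integral_floor_div_mul hx0 hxn intervalIntegrable_log', sum_integral_log_div hn0,
    log_div hn0 hx0.ne']
  field_simp
  ring
end

section
/- For real numbers t and u with 1 ≤ u ≤ t, one has Σ_{j=1}^{⌊t⌋} ⌊j/u⌋ = t·⌊t/u⌋ − (1/2)·u·⌊t/u⌋² − (1/2)·u·⌊t/u⌋ + O(t/u), where the implied constant is absolute. -/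
open Finset

/-!
Since `⌊j/u⌋ = #{k ≥ 1 | k u ≤ j}`, swapping the order of summation turns the sum into
`∑_{k ≤ ⌊t/u⌋} #{j ≤ t | k u ≤ j}`. Each count is within `1` of `t - k u`, and
`∑_{k ≤ ⌊t/u⌋} (t - k u)` is exactly the main term, so the error is at most `⌊t/u⌋ ≤ t/u`.
-/

lemma sum_Icc_sub_mul (t u : ℝ) (m : ℕ) :
    ∑ k ∈ Icc 1 m, (t - k * u) = t * m - u * m ^ 2 / 2 - u * m / 2 := by
  induction m with
  | zero => simp
  | succ m ih =>
    rw [sum_Icc_succ_top (by omega), ih]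
    push_cast
    ring

lemma le_floor_div_iff_mul_le {u x : ℝ} (hu : 0 < u) (hx : 0 ≤ x) {k : ℕ} :
    k ≤ ⌊x / u⌋₊ ↔ (k : ℝ) * u ≤ x := by
  rw [Nat.le_floor_iff (div_nonneg hx hu.le), le_div_iff₀ hu]

lemma card_filter_mul_le_eq_floor {u x y : ℝ} (hu : 0 < u) (hx : 0 ≤ x) (hxy : x ≤ y) :
    #{k ∈ Icc 1 ⌊y / u⌋₊ | ((k : ℕ) : ℝ) * u ≤ x} = ⌊x / u⌋₊ := by
  have hfloor : ⌊x / u⌋₊ ≤ ⌊y / u⌋₊ := Nat.floor_le_floor (by gcongr)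
  have hfilter : {k ∈ Icc 1 ⌊y / u⌋₊ | ((k : ℕ) : ℝ) * u ≤ x} = Icc 1 ⌊x / u⌋₊ := by
    ext k
    simp only [mem_filter, mem_Icc, ← le_floor_div_iff_mul_le hu hx]
    omega
  simp [hfilter]

lemma abs_card_filter_le_sub_le_one {a t : ℝ} (ha : 0 < a) (hat : a ≤ t) :
    |(#{j ∈ Icc 1 ⌊t⌋₊ | a ≤ (j : ℕ)} : ℝ) - (t - a)| ≤ 1 := by
  have hceil_pos : 1 ≤ ⌈a⌉₊ := Nat.one_le_ceil_iff.mpr ha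
  have hceil_le : ⌈a⌉₊ ≤ ⌊t⌋₊ + 1 := by
    have := Nat.ceil_le_floor_add_one a
    have := Nat.floor_le_floor (R := ℝ) hat
    omega
  have hfilter : {j ∈ Icc 1 ⌊t⌋₊ | a ≤ (j : ℕ)} = Icc ⌈a⌉₊ ⌊t⌋₊ := by
    ext j
    simp only [mem_filter, mem_Icc, ← Nat.ceil_le]
    omega
  have hcard : (#{j ∈ Icc 1 ⌊t⌋₊ | a ≤ (j : ℕ)} : ℝ) = ⌊t⌋₊ + 1 - ⌈a⌉₊ := by
    rw [hfilter, Nat.card_Icc, Nat.cast_sub hceil_le]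
    push_cast
    ring
  have h₁ := Nat.floor_le (ha.le.trans hat)
  have h₂ := Nat.lt_floor_add_one t
  have h₃ := Nat.le_ceil a
  have h₄ := Nat.ceil_lt_add_one ha.le
  rw [hcard, abs_le]
  constructor <;> linarith

/-- `Σ_{j=1}^{⌊t⌋} ⌊j/u⌋ = t⌊t/u⌋ − ½u⌊t/u⌋² − ½u⌊t/u⌋ + O(t/u)` with an
absolute implied constant. -/
theorem sum_floor_dilated :
    ∃ C : ℝ, ∀ t u : ℝ, 1 ≤ u → u ≤ t →
      |(∑ j ∈ Finset.Icc 1 ⌊t⌋₊, (⌊(j : ℝ) / u⌋₊ : ℝ))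
          - (t * (⌊t / u⌋₊ : ℝ) - u * (⌊t / u⌋₊ : ℝ) ^ 2 / 2 - u * (⌊t / u⌋₊ : ℝ) / 2)|
        ≤ C * (t / u) := by
  refine ⟨1, fun t u hu hut => ?_⟩
  have hu₀ : 0 < u := one_pos.trans_le hu
  have ht₀ : 0 ≤ t := hu₀.le.trans hut
  set m := ⌊t / u⌋₊
  have hswap : ∑ j ∈ Icc 1 ⌊t⌋₊, (⌊(j : ℝ) / u⌋₊ : ℝ)
      = ∑ k ∈ Icc 1 m, (#{j ∈ Icc 1 ⌊t⌋₊ | (k : ℝ) * u ≤ (j : ℕ)} : ℝ) := by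
    have hcount : ∀ j ∈ Icc 1 ⌊t⌋₊, ⌊(j : ℝ) / u⌋₊ = #{k ∈ Icc 1 m | ((k : ℕ) : ℝ) * u ≤ j} :=
      fun j hj => (card_filter_mul_le_eq_floor hu₀ (Nat.cast_nonneg j)
        ((Nat.cast_le.mpr (mem_Icc.mp hj).2).trans (Nat.floor_le ht₀))).symm
    rw [sum_congr rfl fun j hj => congrArg Nat.cast (hcount j hj)]
    exact_mod_cast sum_card_bipartiteAbove_eq_sum_card_bipartiteBelow
      (fun (j k : ℕ) => (k : ℝ) * u ≤ j)
  rw [hswap, ← sum_Icc_sub_mul, ← sum_sub_distrib]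
  calc |∑ k ∈ Icc 1 m, ((#{j ∈ Icc 1 ⌊t⌋₊ | (k : ℝ) * u ≤ (j : ℕ)} : ℝ) - (t - k * u))|
      ≤ ∑ k ∈ Icc 1 m, (1 : ℝ) := by
        refine (abs_sum_le_sum_abs _ _).trans (sum_le_sum fun k hk => ?_)
        have hk₁ : (1 : ℝ) ≤ k := Nat.one_le_cast.mpr (mem_Icc.mp hk).1
        exact abs_card_filter_le_sub_le_one (by positivity)
          ((le_floor_div_iff_mul_le hu₀ ht₀).mp (mem_Icc.mp hk).2)
    _ = m := by simp
    _ ≤ 1 * (t / u) := by rw [one_mul]; exact Nat.floor_le (by positivity)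
end

section
/- For real α with 0 < α ≤ 1, one has ∫₁^{1/α} (⌊v⌋ + {v}²)/v³ dv = 3/2 − (H_{⌊1/α⌋} − log(1/α)) − α·({1/α} + 1/2) − α²·((1/2){1/α}² − (1/2){1/α}), where H_m is the m-th harmonic number. -/
/-!
On `[n, n + 1)` the integrand is the rational function `(n + (v - n)²) / v³
= 1 / v - 2n / v² + n (n + 1) / v³`, with primitive
`log v + 2n / v - n (n + 1) / (2 v²)`. Summing over the unit intervals from `1` up to `1 / α`
telescopes; each crossing of an integer `n + 1` contributes the term `1 / (n + 1)` of the
harmonic number.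
-/

open Real MeasureTheory intervalIntegral Set

lemma Hnum_succ (n : ℕ) : Hnum (n + 1) = Hnum n + 1 / (n + 1) := by
  rw [Hnum, Hnum, Finset.sum_Icc_succ_top (Nat.le_add_left 1 n)]
  push_cast
  rfl

lemma Hnum_one : Hnum 1 = 1 := by
  simp [Hnum]

lemma Int.fract_eq_sub_natCast_of_mem_Ico {R : Type*} [Ring R] [LinearOrder R]
    [IsStrictOrderedRing R] [FloorRing R] {n : ℕ} {v : R} (hv : v ∈ Ico (n : R) (n + 1)) :
    Int.fract v = v - n := by
  rw [Int.fract_eq_iff]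
  exact ⟨sub_nonneg.mpr hv.1, sub_lt_iff_lt_add'.mpr hv.2, n, by simp⟩

noncomputable def floorFractKernel (v : ℝ) : ℝ := ((⌊v⌋₊ : ℝ) + Int.fract v ^ 2) / v ^ 3

lemma floorFractKernel_eq_of_mem_Ico {n : ℕ} {v : ℝ} (hv : v ∈ Ico (n : ℝ) (n + 1)) :
    floorFractKernel v = ((n : ℝ) + (v - n) ^ 2) / v ^ 3 := by
  rw [floorFractKernel, Nat.floor_eq_on_Ico n v hv, Int.fract_eq_sub_natCast_of_mem_Ico hv]

noncomputable def floorFractPrimitive (n : ℕ) (v : ℝ) : ℝ :=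
  Real.log v + 2 * n / v - n * (n + 1) / 2 / v ^ 2

lemma hasDerivAt_floorFractPrimitive (n : ℕ) {v : ℝ} (hv : 0 < v) :
    HasDerivAt (floorFractPrimitive n) (((n : ℝ) + (v - n) ^ 2) / v ^ 3) v := by
  have h := ((Real.hasDerivAt_log hv.ne').add
    ((hasDerivAt_const v (2 * (n : ℝ))).div (hasDerivAt_id v) hv.ne')).sub
    ((hasDerivAt_const v ((n : ℝ) * (n + 1) / 2)).div (hasDerivAt_pow 2 v)
      (pow_ne_zero 2 hv.ne'))
  refine h.congr_deriv ?_
  simp only [id]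
  field_simp
  ring

lemma integral_floorFractKernel_of_subset_Icc {n : ℕ} {a b : ℝ} (ha : 0 < a)
    (hna : (n : ℝ) ≤ a) (hab : a ≤ b) (hbn : b ≤ n + 1) :
    IntervalIntegrable floorFractKernel volume a b ∧
      ∫ v in a..b, floorFractKernel v = floorFractPrimitive n b - floorFractPrimitive n a := by
  set g : ℝ → ℝ := fun v => ((n : ℝ) + (v - n) ^ 2) / v ^ 3
  have hpos : ∀ v ∈ uIcc a b, 0 < v := fun v hv =>
    ha.trans_le (by rw [uIcc_of_le hab] at hv; exact hv.1)
  have hg : IntervalIntegrable g volume a b :=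
    ContinuousOn.intervalIntegrable <| by
      refine ContinuousOn.div (by fun_prop) (by fun_prop) fun v hv => ?_
      exact pow_ne_zero 3 (hpos v hv).ne'
  have hfg : EqOn floorFractKernel g (uIoo a b) := by
    rw [uIoo_of_le hab]
    exact fun v hv =>
      floorFractKernel_eq_of_mem_Ico ⟨hna.trans hv.1.le, hv.2.trans_le hbn⟩
  refine ⟨hg.congr_uIoo hfg.symm, ?_⟩
  rw [integral_congr_uIoo hfg]
  exact integral_eq_sub_of_hasDerivAt
    (fun v hv => hasDerivAt_floorFractPrimitive n (hpos v hv)) hg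

lemma integral_floorFractKernel_of_mem_Icc {n : ℕ} (hn : 1 ≤ n) {x : ℝ} (hnx : (n : ℝ) ≤ x)
    (hxn : x ≤ n + 1) :
    IntervalIntegrable floorFractKernel volume 1 x ∧
      ∫ v in (1 : ℝ)..x, floorFractKernel v =
        3 / 2 - Hnum n + Real.log x - (1 / x) * ((x - n) + 1 / 2)
          - (1 / x ^ 2) * ((x - n) ^ 2 / 2 - (x - n) / 2) := by
  induction n, hn using Nat.le_induction generalizing x with
  | base =>
    push_cast at hnx hxn
    obtain ⟨hint, hval⟩ :=
      integral_floorFractKernel_of_subset_Icc (n := 1) one_pos (by simp) hnx (by simpa using hxn)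
    refine ⟨hint, ?_⟩
    have hx : x ≠ 0 := by positivity
    rw [hval, Hnum_one]
    simp only [floorFractPrimitive, Nat.cast_one, Real.log_one]
    field_simp
    ring
  | succ n hn ih =>
    push_cast at hnx hxn
    obtain ⟨hint₁, hval₁⟩ := ih (x := n + 1) (by simp) le_rfl
    obtain ⟨hint₂, hval₂⟩ :=
      integral_floorFractKernel_of_subset_Icc (n := n + 1) (a := n + 1) (by positivity)
        (by simp) hnx (by push_cast; linarith)
    refine ⟨hint₁.trans hint₂, ?_⟩
    have hx : x ≠ 0 := by linarith [n.cast_nonneg (α := ℝ)]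
    rw [← integral_add_adjacent_intervals hint₁ hint₂, hval₁, hval₂, Hnum_succ]
    simp only [floorFractPrimitive]
    push_cast
    field_simp
    ring

/-- Evaluation of `∫₁^{1/α} (⌊v⌋ + {v}²)/v³ dv`. -/
theorem integral_floor_fract_cube (α : ℝ) (h0 : 0 < α) (h1 : α ≤ 1) :
    (∫ v in (1:ℝ)..(1/α), ((⌊v⌋₊ : ℝ) + Int.fract v ^ 2) / v ^ 3) =
      3 / 2 - (Hnum ⌊1/α⌋₊ - Real.log (1/α))
        - α * (Int.fract (1/α) + 1 / 2)
        - α ^ 2 * (Int.fract (1/α) ^ 2 / 2 - Int.fract (1/α) / 2) := by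
  set x := 1 / α with hx
  have hx1 : 1 ≤ x := one_le_one_div h0 h1
  have hα : α = 1 / x := by rw [hx, one_div_one_div]
  have hfloor : (⌊x⌋₊ : ℝ) ≤ x := Nat.floor_le (by positivity)
  have hfract : Int.fract x = x - ⌊x⌋₊ :=
    Int.fract_eq_sub_natCast_of_mem_Ico ⟨hfloor, Nat.lt_floor_add_one x⟩
  obtain ⟨-, hval⟩ := integral_floorFractKernel_of_mem_Icc (Nat.floor_pos.mpr hx1) hfloor
    (Nat.lt_floor_add_one x).le
  rw [show (∫ v in (1 : ℝ)..x, ((⌊v⌋₊ : ℝ) + Int.fract v ^ 2) / v ^ 3)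
    = ∫ v in (1 : ℝ)..x, floorFractKernel v from rfl, hval, hfract, hα]
  ring
end
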